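/- arXiv:2202.03077 — 2 statements merged into one kernel-verified Lean document; each statement's English description precedes it below -/
import Mathlib

section
/- Let k: X×X→ℝ with X ⊆ ℝ^d satisfy |k(x,y) − k(x',y')| ≤ L₂(‖x−x'‖ + ‖y−y'‖) for the Euclidean norm. Let S_P = {x_i}_{i=1}^n, S_Q = {y_i}_{i=1}^n and S̃_Q = {ỹ_i}_{i=1}^n with ‖ỹ_i − y_i‖_∞ ≤ ε for all i. Let S_P', S_Q', S̃_Q' be obtained by replacing (x₁, y₁, ỹ₁) with any other triple (x₁', y₁', ỹ₁') with x₁' ∈ X, y₁' ∈ X, ỹ₁' ∈ X and ‖ỹ₁' − y₁'‖_∞ ≤ ε. Then | [MMD̂²(S_P, S̃_Q; k) − MMD̂²(S_P, S_Q; k)] − [MMD̂²(S_P', S̃_Q'; k) − MMD̂²(S_P', S_Q'; k)] | ≤ 16 L₂ ε √d / n. -/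
/-!
Each pair term `H_ij` moves by at most `2 L₂ (‖ỹ_i - y_i‖ + ‖ỹ_j - y_j‖) ≤ 4 L₂ ε √d` when `S_Q`
is replaced by `S̃_Q`, since the coordinatewise bound `ε` gives a Euclidean bound `ε √d`.
Replacing the first triple only changes the pair terms in the first row and column, that is
`2 (n - 1)` of them, each by at most `2 · 4 L₂ ε √d`; the normalization `1 / (n (n - 1))` turns
`16 (n - 1) L₂ ε √d` into `16 L₂ ε √d / n`.
-/

noncomputable section

/-- `H_ij`-type term for the MMD U-statistic. -/
def Hker {d : ℕ} (k : EuclideanSpace ℝ (Fin d) → EuclideanSpace ℝ (Fin d) → ℝ)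
    (x x' y y' : EuclideanSpace ℝ (Fin d)) : ℝ :=
  k x x' + k y y' - k x y' - k x' y

/-- The U-statistic estimator `MMD̂²(S_P, S_Q; k) = (1/(n(n-1))) ∑_{i ≠ j} H_ij`. -/
def MMDhat {d : ℕ} (n : ℕ)
    (k : EuclideanSpace ℝ (Fin d) → EuclideanSpace ℝ (Fin d) → ℝ)
    (X Y : Fin n → EuclideanSpace ℝ (Fin d)) : ℝ :=
  (1 / ((n : ℝ) * ((n : ℝ) - 1))) *
    ∑ i, ∑ j, if i = j then (0 : ℝ) else Hker k (X i) (X j) (Y i) (Y j)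

open Finset

theorem EuclideanSpace.norm_le_mul_sqrt_of_forall_abs_le {ι : Type*} [Fintype ι] {ε : ℝ}
    (hε : 0 ≤ ε) {v : EuclideanSpace ℝ ι} (hv : ∀ t, |v t| ≤ ε) :
    ‖v‖ ≤ ε * √(Fintype.card ι) := by
  calc ‖v‖ = √(∑ t, |v t| ^ 2) := by simp only [EuclideanSpace.norm_eq, Real.norm_eq_abs]
    _ ≤ √(∑ _t : ι, ε ^ 2) := by gcongr with t; exact hv t
    _ = ε * √(Fintype.card ι) := by
      rw [sum_const, card_univ, nsmul_eq_mul, Real.sqrt_mul (Nat.cast_nonneg _), Real.sqrt_sq hε,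
        mul_comm]

section OffDiagSum

variable {ι : Type*} [Fintype ι] [DecidableEq ι]

def offDiagSum (f : ι → ι → ℝ) : ℝ :=
  ∑ i, ∑ j, if i = j then 0 else f i j

theorem offDiagSum_sub (f g : ι → ι → ℝ) :
    offDiagSum (f - g) = offDiagSum f - offDiagSum g := by
  simp only [offDiagSum, ← sum_sub_distrib, Pi.sub_apply]
  refine sum_congr rfl fun i _ => sum_congr rfl fun j _ => ?_
  split_ifs <;> simp

theorem abs_sum_erase_le {f : ι → ℝ} {B : ℝ} (i₀ : ι) (hf : ∀ i, i ≠ i₀ → |f i| ≤ B) :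
    |∑ i ∈ univ.erase i₀, f i| ≤ (Fintype.card ι - 1) * B := by
  calc |∑ i ∈ univ.erase i₀, f i| ≤ ∑ i ∈ univ.erase i₀, |f i| := abs_sum_le_sum_abs _ _
    _ ≤ #(univ.erase i₀) • B := sum_le_card_nsmul _ _ _ fun i hi => hf i (ne_of_mem_erase hi)
    _ = (Fintype.card ι - 1) * B := by
      rw [card_erase_of_mem (mem_univ i₀), card_univ, nsmul_eq_mul,
        Nat.cast_sub (Fintype.card_pos_iff.mpr ⟨i₀⟩), Nat.cast_one]

theorem abs_offDiagSum_le_of_eq_zero {f : ι → ι → ℝ} {B : ℝ} (i₀ : ι)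
    (hB : ∀ i j, i ≠ j → |f i j| ≤ B) (hf : ∀ i j, i ≠ i₀ → j ≠ i₀ → f i j = 0) :
    |offDiagSum f| ≤ 2 * (Fintype.card ι - 1) * B := by
  have hrow : (∑ j, if i₀ = j then 0 else f i₀ j) = ∑ j ∈ univ.erase i₀, f i₀ j := by
    rw [← add_sum_erase _ _ (mem_univ i₀), if_pos rfl, zero_add]
    exact sum_congr rfl fun j hj => if_neg (ne_of_mem_erase hj).symm
  have hcol : ∀ i ∈ univ.erase i₀, (∑ j, if i = j then 0 else f i j) = f i i₀ := fun i hi => by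
    have hi : i ≠ i₀ := ne_of_mem_erase hi
    rw [sum_eq_single i₀ (fun j _ hj => by split_ifs <;> simp [hf i j hi hj]) (by simp), if_neg hi]
  rw [offDiagSum, ← add_sum_erase _ _ (mem_univ i₀), hrow, sum_congr rfl hcol]
  calc _ ≤ |∑ j ∈ univ.erase i₀, f i₀ j| + |∑ i ∈ univ.erase i₀, f i i₀| := abs_add_le _ _
    _ ≤ (Fintype.card ι - 1) * B + (Fintype.card ι - 1) * B :=
      add_le_add (abs_sum_erase_le i₀ fun j hj => hB i₀ j hj.symm)
        (abs_sum_erase_le i₀ fun i hi => hB i i₀ hi)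
    _ = 2 * (Fintype.card ι - 1) * B := by ring

theorem abs_offDiagSum_sub_offDiagSum_le {f g : ι → ι → ℝ} {B : ℝ} (i₀ : ι)
    (hf : ∀ i j, |f i j| ≤ B) (hg : ∀ i j, |g i j| ≤ B)
    (hfg : ∀ i j, i ≠ i₀ → j ≠ i₀ → f i j = g i j) :
    |offDiagSum f - offDiagSum g| ≤ 4 * (Fintype.card ι - 1) * B := by
  rw [← offDiagSum_sub]
  calc _ ≤ 2 * (Fintype.card ι - 1) * (2 * B) :=
        abs_offDiagSum_le_of_eq_zero i₀
          (fun i j _ => (abs_sub _ _).trans (by linarith [hf i j, hg i j]))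
          fun i j hi hj => sub_eq_zero.mpr (hfg i j hi hj)
    _ = 4 * (Fintype.card ι - 1) * B := by ring

end OffDiagSum

/-- For `n ≤ 1` the normalization `1 / (n (n - 1))` is the junk value `1 / 0 = 0`. -/
theorem abs_one_div_mul_mul_sub_one_mul_le (n : ℕ) {A : ℝ} (hA : 0 ≤ A) :
    |1 / ((n : ℝ) * (n - 1))| * ((n - 1) * A) ≤ A / n := by
  rcases n with _ | _ | n
  · simp
  · simpa using div_nonneg hA zero_le_one
  · have hn : ((n + 2 : ℕ) : ℝ) - 1 = n + 1 := by push_cast; ring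
    rw [hn, abs_of_pos (by positivity)]
    exact le_of_eq (by field_simp)

section Kernel

variable {d : ℕ} {Xset : Set (EuclideanSpace ℝ (Fin d))}
  {k : EuclideanSpace ℝ (Fin d) → EuclideanSpace ℝ (Fin d) → ℝ} {L₂ : ℝ}

theorem MMDhat_sub_MMDhat (n : ℕ) (X Y Y' : Fin n → EuclideanSpace ℝ (Fin d)) :
    MMDhat n k X Y' - MMDhat n k X Y = 1 / ((n : ℝ) * (n - 1)) *
      offDiagSum fun i j =>
        Hker k (X i) (X j) (Y' i) (Y' j) - Hker k (X i) (X j) (Y i) (Y j) := by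
  rw [MMDhat, MMDhat, ← mul_sub, ← offDiagSum, ← offDiagSum, ← offDiagSum_sub]
  rfl

theorem abs_Hker_sub_Hker_le
    (hlip : ∀ x ∈ Xset, ∀ y ∈ Xset, ∀ x' ∈ Xset, ∀ y' ∈ Xset,
      |k x y - k x' y'| ≤ L₂ * (‖x - x'‖ + ‖y - y'‖))
    {x x' y y' yt yt' : EuclideanSpace ℝ (Fin d)} (hx : x ∈ Xset) (hx' : x' ∈ Xset)
    (hy : y ∈ Xset) (hy' : y' ∈ Xset) (hyt : yt ∈ Xset) (hyt' : yt' ∈ Xset) :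
    |Hker k x x' yt yt' - Hker k x x' y y'| ≤ 2 * L₂ * (‖yt - y‖ + ‖yt' - y'‖) := by
  have hyy := abs_le.mp (hlip yt hyt yt' hyt' y hy y' hy')
  have hxy' := abs_le.mp (hlip x hx yt' hyt' x hx y' hy')
  have hx'y := abs_le.mp (hlip x' hx' yt hyt x' hx' y hy)
  simp only [sub_self, norm_zero, zero_add] at hxy' hx'y
  rw [Hker, Hker, abs_le]
  constructor <;> linarith [hyy.1, hyy.2, hxy'.1, hxy'.2, hx'y.1, hx'y.2]

theorem abs_Hker_sub_Hker_le_of_forall_norm_le (hL₂ : 0 ≤ L₂)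
    (hlip : ∀ x ∈ Xset, ∀ y ∈ Xset, ∀ x' ∈ Xset, ∀ y' ∈ Xset,
      |k x y - k x' y'| ≤ L₂ * (‖x - x'‖ + ‖y - y'‖))
    {ι : Type*} {X Y Yt : ι → EuclideanSpace ℝ (Fin d)} {E : ℝ}
    (hX : ∀ i, X i ∈ Xset) (hY : ∀ i, Y i ∈ Xset) (hYt : ∀ i, Yt i ∈ Xset)
    (hE : ∀ i, ‖Yt i - Y i‖ ≤ E) (i j : ι) :
    |Hker k (X i) (X j) (Yt i) (Yt j) - Hker k (X i) (X j) (Y i) (Y j)| ≤ 4 * L₂ * E := by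
  calc _ ≤ 2 * L₂ * (‖Yt i - Y i‖ + ‖Yt j - Y j‖) :=
        abs_Hker_sub_Hker_le hlip (hX i) (hX j) (hY i) (hY j) (hYt i) (hYt j)
    _ ≤ 2 * L₂ * (E + E) := by gcongr <;> apply hE
    _ = 4 * L₂ * E := by ring

end Kernel

/-- bounded differences of the adversarial MMD error: replacing the first
sample triple `(x₁, y₁, ỹ₁)` by any other admissible triple changes the error
`MMD̂²(S_P, S̃_Q; k) − MMD̂²(S_P, S_Q; k)` by at most `16 L₂ ε √d / n`. -/
theorem statement5 {d : ℕ} (Xset : Set (EuclideanSpace ℝ (Fin d)))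
    (k : EuclideanSpace ℝ (Fin d) → EuclideanSpace ℝ (Fin d) → ℝ)
    (L₂ ε : ℝ) (hL₂ : 0 < L₂) (hε : 0 ≤ ε)
    (hlip : ∀ x ∈ Xset, ∀ y ∈ Xset, ∀ x' ∈ Xset, ∀ y' ∈ Xset,
      |k x y - k x' y'| ≤ L₂ * (‖x - x'‖ + ‖y - y'‖))
    (n : ℕ) (hn : 0 < n)
    (X Y Yt : Fin n → EuclideanSpace ℝ (Fin d))
    (hX : ∀ i, X i ∈ Xset) (hY : ∀ i, Y i ∈ Xset) (hYt : ∀ i, Yt i ∈ Xset)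
    (hpert : ∀ i, ∀ t : Fin d, |Yt i t - Y i t| ≤ ε)
    (x₁' y₁' yt₁' : EuclideanSpace ℝ (Fin d))
    (hx₁' : x₁' ∈ Xset) (hy₁' : y₁' ∈ Xset) (hyt₁' : yt₁' ∈ Xset)
    (hpert' : ∀ t : Fin d, |yt₁' t - y₁' t| ≤ ε) :
    |(MMDhat n k X Yt - MMDhat n k X Y) -
        (MMDhat n k (Function.update X ⟨0, hn⟩ x₁') (Function.update Yt ⟨0, hn⟩ yt₁') -
          MMDhat n k (Function.update X ⟨0, hn⟩ x₁') (Function.update Y ⟨0, hn⟩ y₁'))| ≤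
      16 * L₂ * ε * Real.sqrt d / n := by
  set i₀ : Fin n := ⟨0, hn⟩
  have hupdate_mem : ∀ {Z : Fin n → EuclideanSpace ℝ (Fin d)} {z}, (∀ i, Z i ∈ Xset) →
      z ∈ Xset → ∀ i, Function.update Z i₀ z i ∈ Xset := fun hZ hz =>
    (Function.forall_update_iff _ fun _ v => v ∈ Xset).mpr ⟨hz, fun i _ => hZ i⟩
  have hE : ∀ i, ‖Yt i - Y i‖ ≤ ε * √d := fun i => by
    simpa using EuclideanSpace.norm_le_mul_sqrt_of_forall_abs_le (ι := Fin d) hε (hpert i)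
  have hE' : ∀ i, ‖Function.update Yt i₀ yt₁' i - Function.update Y i₀ y₁' i‖ ≤ ε * √d := by
    intro i
    rcases eq_or_ne i i₀ with rfl | hi
    · simpa using EuclideanSpace.norm_le_mul_sqrt_of_forall_abs_le (ι := Fin d) hε hpert'
    · simpa [Function.update_of_ne hi] using hE i
  have hdiff := abs_offDiagSum_sub_offDiagSum_le i₀
    (abs_Hker_sub_Hker_le_of_forall_norm_le hL₂.le hlip hX hY hYt hE)
    (abs_Hker_sub_Hker_le_of_forall_norm_le hL₂.le hlip (hupdate_mem hX hx₁') (hupdate_mem hY hy₁')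
      (hupdate_mem hYt hyt₁') hE')
    fun i j hi hj => by simp only [Function.update_of_ne hi, Function.update_of_ne hj]
  rw [Fintype.card_fin] at hdiff
  rw [MMDhat_sub_MMDhat, MMDhat_sub_MMDhat, ← mul_sub, abs_mul]
  calc _ ≤ |1 / ((n : ℝ) * (n - 1))| * ((n - 1) * (16 * L₂ * (ε * √d))) := by
        gcongr
        linarith
    _ ≤ 16 * L₂ * (ε * √d) / n := abs_one_div_mul_mul_sub_one_mul_le n (by positivity)
    _ = 16 * L₂ * ε * √d / n := by ring

end
end

section
/- Let {k_θ}_{θ ∈ Θ} be a family of kernels on X ⊆ ℝ^d satisfying sup_{θ∈Θ} sup_{x,y∈X} |k_θ(x,y)| ≤ ν and |k_θ(x,y) − k_{θ'}(x,y)| ≤ L₁‖θ−θ'‖, and let {θ_i}_{i=1}^P ⊆ Θ be a q-net of Θ. Then for any samples S_P, S_Q and any adversarial set S̃_Q, the error function Δσ(θ) = σ̂²_{H1,λ}(S_P, S̃_Q; k_θ) − σ̂²_{H1,λ}(S_P, S_Q; k_θ) satisfies sup_{θ ∈ Θ} |Δσ(θ)| ≤ max_{1≤i≤P} |Δσ(θ_i)|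 + 512 L₁ ν q. -/
/-!
Changing `θ` to the nearest net point `θᵢ` moves every kernel value by at most `L₁ q`, hence
every entry `H_ij` by at most `4 L₁ q`, while all entries stay bounded by `4 ν`. The estimator is
a quadratic form in the entries, normalised so that it is Lipschitz in the sup norm of `H` with
constant `16 · 4ν`; this gives `|σ̂²(θ) - σ̂²(θᵢ)| ≤ 256 L₁ ν q` for either sample, and the two
such errors add up to `512 L₁ ν q` in `Δσ`.
-/

noncomputable section

/-- The regularized variance estimator `σ̂²_{H1,λ}`. -/
def sigmaHat2 {d : ℕ} (n : ℕ) (lam : ℝ)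
    (k : EuclideanSpace ℝ (Fin d) → EuclideanSpace ℝ (Fin d) → ℝ)
    (X Y : Fin n → EuclideanSpace ℝ (Fin d)) : ℝ :=
  (4 / (n : ℝ) ^ 3) * ∑ i, (∑ j, Hker k (X i) (X j) (Y i) (Y j)) ^ 2
    - (4 / (n : ℝ) ^ 4) * (∑ i, ∑ j, Hker k (X i) (X j) (Y i) (Y j)) ^ 2 + lam

open Finset

lemma abs_sum_le_card_mul {ι : Type*} [Fintype ι] {f : ι → ℝ} {M : ℝ} (hf : ∀ i, |f i| ≤ M) :
    |∑ i, f i| ≤ Fintype.card ι * M :=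
  (abs_sum_le_sum_abs _ _).trans <| by
    simpa using sum_le_sum fun i (_ : i ∈ univ) => hf i

lemma abs_sq_sub_sq_le {a b M δ : ℝ} (ha : |a| ≤ M) (hb : |b| ≤ M) (hab : |a - b| ≤ δ) :
    |a ^ 2 - b ^ 2| ≤ 2 * M * δ := by
  rw [sq_sub_sq, abs_mul]
  have hsum : |a + b| ≤ 2 * M := (abs_add_le a b).trans (by linarith)
  exact mul_le_mul hsum hab (abs_nonneg _) ((abs_nonneg _).trans hsum)

lemma abs_sq_sum_sub_sq_sum_le {ι : Type*} [Fintype ι] {f g : ι → ℝ} {M δ : ℝ}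
    (hf : ∀ i, |f i| ≤ M) (hg : ∀ i, |g i| ≤ M) (hfg : ∀ i, |f i - g i| ≤ δ) :
    |(∑ i, f i) ^ 2 - (∑ i, g i) ^ 2| ≤ 2 * (Fintype.card ι * M) * (Fintype.card ι * δ) :=
  abs_sq_sub_sq_le (abs_sum_le_card_mul hf) (abs_sum_le_card_mul hg)
    (by rw [← sum_sub_distrib]; exact abs_sum_le_card_mul hfg)

/-- For `m = 0` the left side is `0` because `c / 0 = 0`. -/
lemma abs_div_mul_le_of_abs_le_mul {c m x B : ℝ} (hc : 0 ≤ c) (hm : 0 ≤ m) (hB : 0 ≤ B)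
    (hx : |x| ≤ m * B) : |c / m * x| ≤ c * B := by
  rcases hm.eq_or_lt with rfl | hm
  · simpa using mul_nonneg hc hB
  rw [abs_mul, abs_of_nonneg (div_nonneg hc hm.le), div_mul_eq_mul_div, div_le_iff₀ hm]
  nlinarith

def varianceStat (n : ℕ) (H : Fin n → Fin n → ℝ) : ℝ :=
  (4 / (n : ℝ) ^ 3) * ∑ i, (∑ j, H i j) ^ 2 - (4 / (n : ℝ) ^ 4) * (∑ i, ∑ j, H i j) ^ 2

lemma abs_varianceStat_sub_le {n : ℕ} {H H' : Fin n → Fin n → ℝ} {M δ : ℝ} (hM : 0 ≤ M)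
    (hδ : 0 ≤ δ) (hH : ∀ i j, |H i j| ≤ M) (hH' : ∀ i j, |H' i j| ≤ M)
    (hHH' : ∀ i j, |H i j - H' i j| ≤ δ) :
    |varianceStat n H - varianceStat n H'| ≤ 16 * M * δ := by
  have hrow : ∀ i, |(∑ j, H i j) ^ 2 - (∑ j, H' i j) ^ 2| ≤ 2 * (n * M) * (n * δ) := by
    simpa using fun i => abs_sq_sum_sub_sq_sum_le (hH i) (hH' i) (hHH' i)
  have hfirst : |∑ i, (∑ j, H i j) ^ 2 - ∑ i, (∑ j, H' i j) ^ 2| ≤ (n : ℝ) ^ 3 * (2 * M * δ) := by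
    rw [← sum_sub_distrib]
    exact (abs_sum_le_card_mul hrow).trans_eq (by simp; ring)
  have hsecond : |(∑ i, ∑ j, H i j) ^ 2 - (∑ i, ∑ j, H' i j) ^ 2| ≤ (n : ℝ) ^ 4 * (2 * M * δ) := by
    refine (abs_sq_sum_sub_sq_sum_le (M := n * M) (δ := n * δ) ?_ ?_ ?_).trans_eq (by simp; ring)
    · simpa using fun i => abs_sum_le_card_mul (hH i)
    · simpa using fun i => abs_sum_le_card_mul (hH' i)
    · intro i
      rw [← sum_sub_distrib]
      simpa using abs_sum_le_card_mul (hHH' i)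
  have hMδ : 0 ≤ 2 * M * δ := by positivity
  calc |varianceStat n H - varianceStat n H'|
      = |4 / (n : ℝ) ^ 3 * (∑ i, (∑ j, H i j) ^ 2 - ∑ i, (∑ j, H' i j) ^ 2)
          - 4 / (n : ℝ) ^ 4 * ((∑ i, ∑ j, H i j) ^ 2 - (∑ i, ∑ j, H' i j) ^ 2)| := by
        unfold varianceStat; ring_nf
    _ ≤ 4 * (2 * M * δ) + 4 * (2 * M * δ) :=
        (abs_sub _ _).trans <| add_le_add
          (abs_div_mul_le_of_abs_le_mul (by norm_num) (by positivity) hMδ hfirst)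
          (abs_div_mul_le_of_abs_le_mul (by norm_num) (by positivity) hMδ hsecond)
    _ = 16 * M * δ := by ring

section Kernel

variable {d : ℕ}

lemma sigmaHat2_eq_varianceStat (n : ℕ) (lam : ℝ)
    (k : EuclideanSpace ℝ (Fin d) → EuclideanSpace ℝ (Fin d) → ℝ)
    (X Y : Fin n → EuclideanSpace ℝ (Fin d)) :
    sigmaHat2 n lam k X Y = varianceStat n (fun i j => Hker k (X i) (X j) (Y i) (Y j)) + lam :=
  rfl

lemma Hker_sub_Hker (k k' : EuclideanSpace ℝ (Fin d) → EuclideanSpace ℝ (Fin d) → ℝ)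
    (x x' y y' : EuclideanSpace ℝ (Fin d)) :
    Hker k x x' y y' - Hker k' x x' y y' = Hker (k - k') x x' y y' := by
  simp only [Hker, Pi.sub_apply]
  ring

lemma abs_Hker_le {S : Set (EuclideanSpace ℝ (Fin d))}
    {k : EuclideanSpace ℝ (Fin d) → EuclideanSpace ℝ (Fin d) → ℝ} {B : ℝ}
    (hk : ∀ u ∈ S, ∀ v ∈ S, |k u v| ≤ B) {x x' y y' : EuclideanSpace ℝ (Fin d)}
    (hx : x ∈ S) (hx' : x' ∈ S) (hy : y ∈ S) (hy' : y' ∈ S) :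
    |Hker k x x' y y'| ≤ 4 * B := by
  have h₁ := abs_le.1 (hk x hx x' hx')
  have h₂ := abs_le.1 (hk y hy y' hy')
  have h₃ := abs_le.1 (hk x hx y' hy')
  have h₄ := abs_le.1 (hk x' hx' y hy)
  rw [Hker, abs_le]
  constructor <;> linarith

lemma abs_sigmaHat2_sub_le {S : Set (EuclideanSpace ℝ (Fin d))}
    {k k' : EuclideanSpace ℝ (Fin d) → EuclideanSpace ℝ (Fin d) → ℝ} {ν ε : ℝ} (n : ℕ) (lam : ℝ)
    (hν : 0 ≤ ν) (hε : 0 ≤ ε) (hk : ∀ u ∈ S, ∀ v ∈ S, |k u v| ≤ ν)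
    (hk' : ∀ u ∈ S, ∀ v ∈ S, |k' u v| ≤ ν) (hkk' : ∀ u ∈ S, ∀ v ∈ S, |k u v - k' u v| ≤ ε)
    {X Y : Fin n → EuclideanSpace ℝ (Fin d)} (hX : ∀ i, X i ∈ S) (hY : ∀ i, Y i ∈ S) :
    |sigmaHat2 n lam k X Y - sigmaHat2 n lam k' X Y| ≤ 256 * ν * ε := by
  rw [sigmaHat2_eq_varianceStat, sigmaHat2_eq_varianceStat, add_sub_add_right_eq_sub]
  refine (abs_varianceStat_sub_le (M := 4 * ν) (δ := 4 * ε) (by positivity) (by positivity)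
    (fun i j => abs_Hker_le hk (hX i) (hX j) (hY i) (hY j))
    (fun i j => abs_Hker_le hk' (hX i) (hX j) (hY i) (hY j))
    (fun i j => ?_)).trans_eq (by ring)
  rw [Hker_sub_Hker]
  exact abs_Hker_le (k := k - k') hkk' (hX i) (hX j) (hY i) (hY j)

end Kernel

theorem statement9_general {d κ : ℕ} (Xset : Set (EuclideanSpace ℝ (Fin d)))
    (Θ : Set (EuclideanSpace ℝ (Fin κ)))
    (k : EuclideanSpace ℝ (Fin κ) → EuclideanSpace ℝ (Fin d) → EuclideanSpace ℝ (Fin d) → ℝ)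
    (ν L₁ q lam : ℝ) (hν : 0 < ν) (hL₁ : 0 < L₁)
    (hbound : ∀ θ ∈ Θ, ∀ x ∈ Xset, ∀ y ∈ Xset, |k θ x y| ≤ ν)
    (hlip : ∀ θ ∈ Θ, ∀ θ' ∈ Θ, ∀ x ∈ Xset, ∀ y ∈ Xset,
      |k θ x y - k θ' x y| ≤ L₁ * ‖θ - θ'‖)
    (Pn : ℕ) (hPn : 0 < Pn)
    (θs : Fin Pn → EuclideanSpace ℝ (Fin κ)) (hθs : ∀ i, θs i ∈ Θ)
    -- `{θ_i}` is a `q`-net of `Θ`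
    (hnet : ∀ θ ∈ Θ, ∃ i, ‖θ - θs i‖ ≤ q)
    (n : ℕ) (X Y Yt : Fin n → EuclideanSpace ℝ (Fin d))
    (hX : ∀ i, X i ∈ Xset) (hY : ∀ i, Y i ∈ Xset) (hYt : ∀ i, Yt i ∈ Xset) :
    ∀ θ ∈ Θ,
      |sigmaHat2 n lam (k θ) X Yt - sigmaHat2 n lam (k θ) X Y| ≤
        (Finset.univ.sup' (Finset.univ_nonempty_iff.mpr ⟨⟨0, hPn⟩⟩)
          fun i => |sigmaHat2 n lam (k (θs i)) X Yt - sigmaHat2 n lam (k (θs i)) X Y|)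
        + 512 * L₁ * ν * q := by
  intro θ hθ
  obtain ⟨i, hi⟩ := hnet θ hθ
  have hclose : ∀ Z : Fin n → EuclideanSpace ℝ (Fin d), (∀ j, Z j ∈ Xset) →
      |sigmaHat2 n lam (k θ) X Z - sigmaHat2 n lam (k (θs i)) X Z| ≤ 256 * L₁ * ν * q := by
    intro Z hZ
    refine (abs_sigmaHat2_sub_le n lam hν.le (by positivity) (hbound θ hθ) (hbound _ (hθs i))
      (hlip θ hθ _ (hθs i)) hX hZ).trans ?_
    nlinarith [mul_le_mul_of_nonneg_left hi (mul_nonneg hL₁.le hν.le)]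
  have hnet_point := le_sup' (fun j =>
    |sigmaHat2 n lam (k (θs j)) X Yt - sigmaHat2 n lam (k (θs j)) X Y|) (mem_univ i)
  have htriangle := abs_sub_le (sigmaHat2 n lam (k θ) X Yt) (sigmaHat2 n lam (k (θs i)) X Yt)
    (sigmaHat2 n lam (k θ) X Y)
  have htriangle' := abs_sub_le (sigmaHat2 n lam (k (θs i)) X Yt)
    (sigmaHat2 n lam (k (θs i)) X Y) (sigmaHat2 n lam (k θ) X Y)
  rw [abs_sub_comm (sigmaHat2 n lam (k (θs i)) X Y)] at htriangle'
  linarith [hclose Yt hYt, hclose Y hY]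

/-- the supremum over `Θ` of the adversarial variance-estimator error
`Δσ(θ) = σ̂²_{H1,λ}(S_P, S̃_Q; k_θ) − σ̂²_{H1,λ}(S_P, S_Q; k_θ)` is controlled by its maximum
over a `q`-net of `Θ` up to `512 L₁ ν q`. -/
theorem statement9 {d κ : ℕ} (Xset : Set (EuclideanSpace ℝ (Fin d)))
    (Θ : Set (EuclideanSpace ℝ (Fin κ)))
    (k : EuclideanSpace ℝ (Fin κ) → EuclideanSpace ℝ (Fin d) → EuclideanSpace ℝ (Fin d) → ℝ)
    (ν L₁ q lam : ℝ) (hν : 0 < ν) (hL₁ : 0 < L₁) (hq : 0 < q) (hlam : 0 < lam)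
    (hbound : ∀ θ ∈ Θ, ∀ x ∈ Xset, ∀ y ∈ Xset, |k θ x y| ≤ ν)
    (hlip : ∀ θ ∈ Θ, ∀ θ' ∈ Θ, ∀ x ∈ Xset, ∀ y ∈ Xset,
      |k θ x y - k θ' x y| ≤ L₁ * ‖θ - θ'‖)
    (Pn : ℕ) (hPn : 0 < Pn)
    (θs : Fin Pn → EuclideanSpace ℝ (Fin κ)) (hθs : ∀ i, θs i ∈ Θ)
    -- `{θ_i}` is a `q`-net of `Θ`
    (hnet : ∀ θ ∈ Θ, ∃ i, ‖θ - θs i‖ ≤ q)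
    (n : ℕ) (X Y Yt : Fin n → EuclideanSpace ℝ (Fin d))
    (hX : ∀ i, X i ∈ Xset) (hY : ∀ i, Y i ∈ Xset) (hYt : ∀ i, Yt i ∈ Xset) :
    ∀ θ ∈ Θ,
      |sigmaHat2 n lam (k θ) X Yt - sigmaHat2 n lam (k θ) X Y| ≤
        (Finset.univ.sup' (Finset.univ_nonempty_iff.mpr ⟨⟨0, hPn⟩⟩)
          fun i => |sigmaHat2 n lam (k (θs i)) X Yt - sigmaHat2 n lam (k (θs i)) X Y|)
        + 512 * L₁ * ν * q :=
  statement9_general Xset Θ k ν L₁ q lam hν hL₁ hbound hlip Pn hPn θs hθs hnet n X Y Yt hX hY hYt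

end
end
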